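/- With m̄ as above (assuming sup_x H(x) ≥ 0 for all admissible H), m̄ is Γ-invariant: m̄(γ·f) = m̄(f) for every γ ∈ Γ and f ∈ ℓ∞(X), where (γ·f)(x) = f(γ⁻¹x). -/

import Mathlib

open BoundedContinuousFunction

/-- The left-regular lregTranslate of a bounded function: `(γ · f)(x) = f(γ⁻¹ • x)`. -/
noncomputable def lregTranslate {Γ X : Type*} [Group Γ] [MulAction Γ X]
    [TopologicalSpace X] [DiscreteTopology X] (γ : Γ) (f : X →ᵇ ℝ) : X →ᵇ ℝ :=
  f.compContinuous ⟨fun x => γ⁻¹ • x, continuous_of_discreteTopology⟩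

/-- A `Γ`-invariant mean on `ℓ∞(X)`: a positive linear functional with `m 1 = 1`
invariant under the left-regular action. -/
structure InvariantMean (Γ X : Type*) [Group Γ] [MulAction Γ X]
    [TopologicalSpace X] [DiscreteTopology X] where
  toFun : (X →ᵇ ℝ) →ₗ[ℝ] ℝ
  nonneg : ∀ f : X →ᵇ ℝ, (∀ x, 0 ≤ f x) → 0 ≤ toFun f
  map_one : toFun 1 = 1
  invariant : ∀ (γ : Γ) (f : X →ᵇ ℝ), toFun (lregTranslate γ f) = toFun f


/-- Admissible functions: finite sums `Σᵢ (hᵢ − γᵢ·hᵢ)` with `hᵢ ∈ ℓ∞(X)`, `γᵢ ∈ Γ`. -/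
def Admissible (Γ : Type*) {X : Type*} [Group Γ] [MulAction Γ X]
    [TopologicalSpace X] [DiscreteTopology X] (H : X →ᵇ ℝ) : Prop :=
  ∃ (n : ℕ) (h : Fin n → (X →ᵇ ℝ)) (g : Fin n → Γ),
    H = ∑ i, (h i - lregTranslate (g i) (h i))

/-- `m̄(f) = inf_H sup_x (f(x) + H(x))`, the infimum over all admissible `H`. -/
noncomputable def mbar (Γ : Type*) {X : Type*} [Group Γ] [MulAction Γ X]
    [TopologicalSpace X] [DiscreteTopology X] (f : X →ᵇ ℝ) : ℝ :=
  ⨅ H : {H : X →ᵇ ℝ // Admissible Γ H}, ⨆ x : X, (f x + (H : X →ᵇ ℝ) x)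

/-
Adding an admissible `D` permutes the admissible functions, `H ↦ D + H`, so `m̄(f + D)` and
`m̄(f)` are infima of the same family of reals. Since `γ·f − f` is admissible, `m̄(γ·f) = m̄(f)`.
-/

section Admissible

variable {Γ X : Type*} [Group Γ] [MulAction Γ X] [TopologicalSpace X] [DiscreteTopology X]

@[simp]
lemma lregTranslate_inv_lregTranslate (γ : Γ) (f : X →ᵇ ℝ) :
    lregTranslate γ⁻¹ (lregTranslate γ f) = f := by
  ext x
  simp [lregTranslate]

lemma admissible_sub_lregTranslate (γ : Γ) (f : X →ᵇ ℝ) :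
    Admissible Γ (f - lregTranslate γ f) :=
  ⟨1, fun _ => f, fun _ => γ, by simp⟩

lemma Admissible.add {H K : X →ᵇ ℝ} (hH : Admissible Γ H) (hK : Admissible Γ K) :
    Admissible Γ (H + K) := by
  obtain ⟨n, h, g, rfl⟩ := hH
  obtain ⟨m, h', g', rfl⟩ := hK
  exact ⟨n + m, Fin.addCases h h', Fin.addCases g g', by
    rw [Fin.sum_univ_add]; simp⟩

-- `-(h - γ·h) = γ·h - γ⁻¹·(γ·h)`
lemma Admissible.neg {H : X →ᵇ ℝ} (hH : Admissible Γ H) : Admissible Γ (-H) := by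
  obtain ⟨n, h, g, rfl⟩ := hH
  exact ⟨n, fun i => lregTranslate (g i) (h i), fun i => (g i)⁻¹, by simp⟩

lemma mbar_add_of_admissible {D : X →ᵇ ℝ} (hD : Admissible Γ D) (f : X →ᵇ ℝ) :
    mbar Γ (f + D) = mbar Γ f := by
  let e : {H : X →ᵇ ℝ // Admissible Γ H} ≃ {H : X →ᵇ ℝ // Admissible Γ H} :=
    (Equiv.addLeft D).subtypeEquiv fun H =>
      ⟨hD.add, fun hDH => by simpa using hD.neg.add hDH⟩
  unfold mbar
  conv_rhs => rw [← e.iInf_comp]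
  simp [e, add_assoc]

end Admissible

theorem mbar_invariant_general {Γ X : Type*} [Group Γ] [MulAction Γ X]
    [TopologicalSpace X] [DiscreteTopology X]
    (γ : Γ) (f : X →ᵇ ℝ) :
    mbar Γ (lregTranslate γ f) = mbar Γ f := by
  have hD : Admissible Γ (lregTranslate γ f - f) := by
    simpa using (admissible_sub_lregTranslate γ f).neg
  simpa using mbar_add_of_admissible hD f

/-- `m̄` is `Γ`-invariant: `m̄(γ·f) = m̄(f)`. -/
theorem mbar_invariant {Γ X : Type*} [Group Γ] [MulAction Γ X] [Nonempty X]
    [TopologicalSpace X] [DiscreteTopology X]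
    (hpos : ∀ H : X →ᵇ ℝ, Admissible Γ H → 0 ≤ ⨆ x : X, H x)
    (γ : Γ) (f : X →ᵇ ℝ) :
    mbar Γ (lregTranslate γ f) = mbar Γ f :=
  mbar_invariant_general γ f
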